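/- For every N ∈ ℕ and every function f : [-1,1] → ℝ, there exists a unique φ ∈ 𝒢'_N such that φ(x_n) = f(x_n) for all n = −N−1,…,N; equivalently, the matrix Ã is invertible, so the discrete least squares problem min_{φ ∈ 𝒢'_N} Σ_{n=−N−1}^{N} |f(x_n) − φ(x_n)|² has value zero and its unique minimizer interpolates f at the 2N+2 mapped symmetric Chebyshev nodes. -/

import Mathlib

/-- The mapped symmetric Chebyshev node with nonnegative index `k ∈ {0,…,N}`. -/
noncomputable def chebNodePos (T : ℝ) (N : ℕ) (k : ℕ) : ℝ :=
  (T / Real.pi) * Real.arccos (((1 - Real.cos (Real.pi / T)) / 2) *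
    Real.cos ((2 * (k : ℝ) + 1) * Real.pi / (2 * (N : ℝ) + 2)) +
    (1 + Real.cos (Real.pi / T)) / 2)

/-- The mapped symmetric Chebyshev nodes `x_n`, `n = -N-1,…,N`, with `x_{-n-1} = -x_n`. -/
noncomputable def chebNode (T : ℝ) (N : ℕ) (n : ℤ) : ℝ :=
  if 0 ≤ n then chebNodePos T N n.toNat else -chebNodePos T N (-n - 1).toNat

/-- The real trigonometric basis: `ψ_n(x) = cos(nπx/T)` for `n ≥ 0`,
`ψ_{-(n+1)}(x) = sin((n+1)πx/T)`. -/
noncomputable def psiFE (T : ℝ) (n : ℤ) (x : ℝ) : ℝ :=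
  if 0 ≤ n then Real.cos ((n : ℝ) * Real.pi * x / T)
  else Real.sin ((-(n : ℝ)) * Real.pi * x / T)

/-- The discrete Fourier extension matrix `Ã` with entries `Ã_{n,m} = √(π/(N+1)) ψ_m(x_n)`. -/
noncomputable def Atilde (T : ℝ) (N : ℕ) : Matrix (Fin (2 * N + 2)) (Fin (2 * N + 2)) ℝ :=
  fun i j => Real.sqrt (Real.pi / ((N : ℝ) + 1)) *
    psiFE T (((j : ℕ) : ℤ) - ((N : ℤ) + 1)) (chebNode T N (((i : ℕ) : ℤ) - ((N : ℤ) + 1)))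

/-- Membership of `φ` in `𝒢'_N = span{ψ_n : n = -N-1,…,N}`. -/
def memGN' (T : ℝ) (N : ℕ) (φ : ℝ → ℝ) : Prop :=
  ∃ c : Fin (2 * N + 2) → ℝ, φ = fun x => ∑ m, c m * psiFE T (((m : ℕ) : ℤ) - ((N : ℤ) + 1)) x

/-!
Substituting `x = (T/π) θ` turns `ψ_t` into `cos (t θ) = T_t (cos θ)` and `ψ_{-(t+1)}` into
`sin ((t+1) θ) = U_t (cos θ) · sin θ`. The nodes come in pairs `±x_k` with `cos θ_k = y_k`,
where the `y_k` are the roots of `T_{N+1}` mapped affinely into `(-1, 1)`; in particular they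
are distinct and `sin θ_k ≠ 0`. Pairing rows and columns by symmetry, the collocation matrix
becomes `[[-S, C], [S, C]]` with determinant `(-2)^(N+1) det S det C`, and `C` and
`diag (sin θ)⁻¹ S` are Vandermonde matrices in the `y_k` times triangular matrices with the
leading coefficients of the Chebyshev polynomials on the diagonal. Interpolation and the least
squares claim are then linear algebra.
-/

open Polynomial Matrix Function Real

noncomputable def Polynomial.Chebyshev.chebyshevUsequence (R : Type*) [CommRing R] [IsDomain R]
    [NeZero (2 : R)] : Polynomial.Sequence R where
  elems' n := Chebyshev.U R n
  degree_eq' n := Chebyshev.degree_U_natCast R n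

theorem Polynomial.Sequence.det_eval_ne_zero {R : Type*} [CommRing R] [IsDomain R]
    (S : Polynomial.Sequence R) {n : ℕ} {v : Fin n → R} (hv : Injective v) :
    (Matrix.of fun i j : Fin n => (S j).eval (v i)).det ≠ 0 := by
  rw [eval_matrixOfPolynomials_eq_vandermonde_mul_matrixOfPolynomials v (fun j => S j)
      fun j => (S.natDegree_eq j).le, det_mul,
    det_of_isUpperTriangular (matrixOfPolynomials_blockTriangular _ fun j => (S.natDegree_eq j).le)]
  refine mul_ne_zero (det_vandermonde_ne_zero_iff.mpr hv)
    (Finset.prod_ne_zero_iff.mpr fun j _ => ?_)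
  have hlead : (S j).coeff j = (S j).leadingCoeff := by rw [leadingCoeff, S.natDegree_eq]
  rw [of_apply, hlead]
  exact leadingCoeff_ne_zero.mpr (S.ne_zero j)

theorem Matrix.det_fromBlocks_neg_self {n R : Type*} [Fintype n] [DecidableEq n] [CommRing R]
    (A B : Matrix n n R) :
    (fromBlocks (-A) B A B).det = (-2) ^ Fintype.card n * A.det * B.det := by
  have h : fromBlocks 1 0 1 1 * fromBlocks (-A) B A B = fromBlocks (-A) B 0 ((2 : R) • B) := by
    rw [fromBlocks_multiply]; congr 1 <;> simp [two_smul]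
  have hdet := congrArg det h
  rw [det_mul, det_fromBlocks_zero₁₂, det_fromBlocks_zero₂₁, det_neg, det_smul, det_one,
    one_mul, one_mul] at hdet
  rw [hdet, neg_eq_neg_one_mul (2 : R), mul_pow]; ring

noncomputable def sinMatrix {n : ℕ} (θ : Fin n → ℝ) : Matrix (Fin n) (Fin n) ℝ :=
  Matrix.of fun k t => sin ((t + 1) * θ k)

noncomputable def cosMatrix {n : ℕ} (θ : Fin n → ℝ) : Matrix (Fin n) (Fin n) ℝ :=
  Matrix.of fun k t => cos (t * θ k)

theorem det_cosMatrix_ne_zero {n : ℕ} {θ : Fin n → ℝ} (hθ : Injective (cos ∘ θ)) :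
    (cosMatrix θ).det ≠ 0 := by
  have h : cosMatrix θ =
      Matrix.of fun k (t : Fin n) => (Chebyshev.chebyshevTsequence ℝ t).eval (cos (θ k)) := by
    ext k t
    simp [cosMatrix, Chebyshev.chebyshevTsequence]
  rw [h]
  exact (Chebyshev.chebyshevTsequence ℝ).det_eval_ne_zero hθ

theorem det_sinMatrix_ne_zero {n : ℕ} {θ : Fin n → ℝ} (hθ : Injective (cos ∘ θ))
    (hsin : ∀ k, sin (θ k) ≠ 0) : (sinMatrix θ).det ≠ 0 := by
  have h : sinMatrix θ = diagonal (sin ∘ θ) *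
      Matrix.of fun k (t : Fin n) => (Chebyshev.chebyshevUsequence ℝ t).eval (cos (θ k)) := by
    ext k t
    rw [diagonal_mul, sinMatrix, of_apply, of_apply, Function.comp_apply, mul_comm (sin _)]
    exact_mod_cast (Chebyshev.U_real_cos (θ k) t).symm
  rw [h, det_mul, det_diagonal]
  exact mul_ne_zero (Finset.prod_ne_zero_iff.mpr fun k _ => hsin k)
    ((Chebyshev.chebyshevUsequence ℝ).det_eval_ne_zero hθ)

theorem existsUnique_interpolant {ι α K : Type*} [Fintype ι] [DecidableEq ι] [Field K]
    {b : ι → α → K} {x : ι → α} (hdet : (Matrix.of fun i j => b j (x i)).det ≠ 0) (f : α → K) :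
    ∃! φ : α → K, (∃ c : ι → K, φ = fun t => ∑ m, c m * b m t) ∧ ∀ k, φ (x k) = f (x k) := by
  set M : Matrix ι ι K := Matrix.of fun i j => b j (x i)
  have hM : IsUnit M := (isUnit_iff_isUnit_det M).mpr hdet.isUnit
  have hval : ∀ c : ι → K, (fun k => ∑ m, c m * b m (x k)) = M *ᵥ c := fun c => by
    ext k; simp [M, mulVec, dotProduct, mul_comm]
  obtain ⟨c, hc⟩ := (mulVec_surjective_iff_isUnit.mpr hM) (f ∘ x)
  refine ⟨fun t => ∑ m, c m * b m t, ⟨⟨c, rfl⟩, fun k => congrFun ((hval c).trans hc) k⟩, ?_⟩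
  rintro _ ⟨⟨c', rfl⟩, hc'⟩
  have hMc : M *ᵥ c' = M *ᵥ c := by rw [← hval, hc]; exact funext hc'
  rw [mulVec_injective_iff_isUnit.mpr hM hMc]

theorem interpolates_of_forall_sum_sq_le {ι α : Type*} [Fintype ι] {P : (α → ℝ) → Prop}
    {x : ι → α} {f φ : α → ℝ}
    (hφ : ∀ ψ, P ψ → ∑ k, (f (x k) - φ (x k)) ^ 2 ≤ ∑ k, (f (x k) - ψ (x k)) ^ 2)
    (hP : ∃ ψ, P ψ ∧ ∀ k, ψ (x k) = f (x k)) (k : ι) : φ (x k) = f (x k) := by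
  obtain ⟨ψ, hψ, hint⟩ := hP
  have hzero : ∑ k, (f (x k) - φ (x k)) ^ 2 = 0 :=
    le_antisymm (by simpa [hint] using hφ ψ hψ) (Finset.sum_nonneg fun _ _ => sq_nonneg _)
  have hsq := (Finset.sum_eq_zero_iff_of_nonneg fun _ _ => sq_nonneg _).mp hzero k
    (Finset.mem_univ k)
  exact (sub_eq_zero.mp (pow_eq_zero_iff two_ne_zero |>.mp hsq)).symm

-- The argument of `arccos` in `chebNodePos`: the roots of `T_{N+1}` mapped onto `(cos (π/T), 1)`.
noncomputable def chebPoint (T : ℝ) (N k : ℕ) : ℝ :=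
  ((1 - cos (π / T)) / 2) * cos ((2 * (k : ℝ) + 1) * π / (2 * (N : ℝ) + 2)) + (1 + cos (π / T)) / 2

noncomputable def chebAngle (T : ℝ) (N k : ℕ) : ℝ := arccos (chebPoint T N k)

theorem cos_mem_Ioo_of_mem_Ioo {x : ℝ} (hx : x ∈ Set.Ioo 0 π) : cos x ∈ Set.Ioo (-1) 1 := by
  constructor
  · simpa using cos_lt_cos_of_nonneg_of_le_pi hx.1.le le_rfl hx.2
  · simpa using cos_lt_cos_of_nonneg_of_le_pi le_rfl hx.2.le hx.1

theorem cos_pi_div_mem_Ioo {T : ℝ} (hT : 1 < T) : cos (π / T) ∈ Set.Ioo (-1) 1 :=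
  cos_mem_Ioo_of_mem_Ioo ⟨by positivity, div_lt_self pi_pos hT⟩

theorem chebPoint_mem_Ioo {T : ℝ} (hT : 1 < T) {N k : ℕ} (hk : k < N + 1) :
    chebPoint T N k ∈ Set.Ioo (-1) 1 := by
  obtain ⟨hγ₁, hγ₂⟩ := cos_pi_div_mem_Ioo hT
  obtain ⟨hc₁, hc₂⟩ := cos_mem_Ioo_of_mem_Ioo (x := (2 * (k : ℝ) + 1) * π / (2 * (N : ℝ) + 2))
    ⟨by positivity, by
      rw [div_lt_iff₀ (by positivity)]
      nlinarith [pi_pos, (Nat.cast_le (α := ℝ)).mpr (Nat.lt_succ_iff.mp hk)]⟩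
  constructor <;> unfold chebPoint <;> nlinarith

theorem chebPoint_injective {T : ℝ} (hT : 1 < T) (N : ℕ) :
    Injective fun k : Fin (N + 1) => chebPoint T N k := by
  have hroots := (Finset.range (N + 1)).nodup_map_iff_injOn.mp
    (Chebyshev.roots_T_real_nodup (N + 1))
  have hγ : (1 - cos (π / T)) / 2 ≠ 0 := by linarith [(cos_pi_div_mem_Ioo hT).2]
  intro i j hij
  refine Fin.ext (hroots (Finset.mem_range.mpr i.isLt) (Finset.mem_range.mpr j.isLt) ?_)
  simpa [chebPoint, hγ, mul_add, add_assoc] using hij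

noncomputable def psiMatrix (T : ℝ) (N : ℕ) : Matrix (Fin (2 * N + 2)) (Fin (2 * N + 2)) ℝ :=
  Matrix.of fun i j =>
    psiFE T (((j : ℕ) : ℤ) - ((N : ℤ) + 1)) (chebNode T N (((i : ℕ) : ℤ) - ((N : ℤ) + 1)))

def symmIndexEquiv (N : ℕ) : Fin (N + 1) ⊕ Fin (N + 1) ≃ Fin (2 * N + 2) :=
  (Equiv.sumCongr Fin.revPerm (Equiv.refl _)).trans (finSumFinEquiv.trans (finCongr (by ring)))

theorem symmIndexEquiv_inl {N : ℕ} (t : Fin (N + 1)) :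
    ((symmIndexEquiv N (.inl t) : ℕ) : ℤ) - ((N : ℤ) + 1) = -((t : ℕ) + 1 : ℤ) := by
  simp only [symmIndexEquiv, Equiv.trans_apply, Equiv.sumCongr_apply, Sum.map_inl,
    Fin.revPerm_apply, finSumFinEquiv_apply_left, finCongr_apply, Fin.val_cast, Fin.val_castAdd,
    Fin.val_rev]
  omega

theorem symmIndexEquiv_inr {N : ℕ} (t : Fin (N + 1)) :
    ((symmIndexEquiv N (.inr t) : ℕ) : ℤ) - ((N : ℤ) + 1) = (t : ℕ) := by
  simp [symmIndexEquiv]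

theorem psiFE_natCast {T : ℝ} (hT : T ≠ 0) (t : ℕ) (θ : ℝ) :
    psiFE T t (T / π * θ) = cos (t * θ) := by
  simp only [psiFE, Nat.cast_nonneg, if_true, Int.cast_natCast]
  congr 1
  field_simp

theorem psiFE_neg_succ {T : ℝ} (hT : T ≠ 0) (t : ℕ) (θ : ℝ) :
    psiFE T (-((t : ℤ) + 1)) (T / π * θ) = sin ((t + 1) * θ) := by
  rw [psiFE, if_neg (by omega)]
  push_cast
  congr 1
  field_simp

theorem chebNode_natCast (T : ℝ) (N t : ℕ) : chebNode T N t = T / π * chebAngle T N t := by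
  simp [chebNode, chebNodePos, chebAngle, chebPoint]

theorem chebNode_neg_succ (T : ℝ) (N t : ℕ) :
    chebNode T N (-((t : ℤ) + 1)) = T / π * -chebAngle T N t := by
  rw [chebNode, if_neg (by omega), mul_neg]
  simp [chebNodePos, chebAngle, chebPoint]

theorem psiMatrix_submatrix_symmIndexEquiv {T : ℝ} (hT : T ≠ 0) (N : ℕ) :
    (psiMatrix T N).submatrix (symmIndexEquiv N) (symmIndexEquiv N) =
      fromBlocks (-sinMatrix (fun k => chebAngle T N k)) (cosMatrix fun k => chebAngle T N k)
        (sinMatrix fun k => chebAngle T N k) (cosMatrix fun k => chebAngle T N k) := by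
  ext (k | k) (t | t) <;>
    simp only [submatrix_apply, psiMatrix, of_apply, symmIndexEquiv_inl, symmIndexEquiv_inr,
      chebNode_natCast, chebNode_neg_succ, psiFE_natCast hT, psiFE_neg_succ hT,
      fromBlocks_apply₁₁, fromBlocks_apply₁₂, fromBlocks_apply₂₁, fromBlocks_apply₂₂, sinMatrix,
      cosMatrix, Matrix.neg_apply] <;>
    simp only [mul_neg, sin_neg, cos_neg]

theorem cos_chebAngle {T : ℝ} (hT : 1 < T) {N k : ℕ} (hk : k < N + 1) :
    cos (chebAngle T N k) = chebPoint T N k :=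
  cos_arccos (chebPoint_mem_Ioo hT hk).1.le (chebPoint_mem_Ioo hT hk).2.le

theorem sin_chebAngle_pos {T : ℝ} (hT : 1 < T) {N k : ℕ} (hk : k < N + 1) :
    0 < sin (chebAngle T N k) :=
  sin_pos_of_pos_of_lt_pi (arccos_pos.mpr (chebPoint_mem_Ioo hT hk).2)
    (arccos_lt_pi.mpr (chebPoint_mem_Ioo hT hk).1)

theorem det_psiMatrix_ne_zero {T : ℝ} (hT : 1 < T) (N : ℕ) : (psiMatrix T N).det ≠ 0 := by
  have hcos : Injective (cos ∘ fun k : Fin (N + 1) => chebAngle T N k) := by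
    convert chebPoint_injective hT N using 1
    ext k
    exact cos_chebAngle hT k.isLt
  have hsin (k : Fin (N + 1)) : sin (chebAngle T N k) ≠ 0 := (sin_chebAngle_pos hT k.isLt).ne'
  rw [← det_submatrix_equiv_self (symmIndexEquiv N),
    psiMatrix_submatrix_symmIndexEquiv (by positivity) N, det_fromBlocks_neg_self]
  exact mul_ne_zero (mul_ne_zero (pow_ne_zero _ (by norm_num)) (det_sinMatrix_ne_zero hcos hsin))
    (det_cosMatrix_ne_zero hcos)

/-- `Ã` is invertible; for every `f` there is a unique `φ ∈ 𝒢'_N` interpolating `f` at the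
`2N+2` mapped symmetric Chebyshev nodes; and every minimizer of the discrete least squares
problem over `𝒢'_N` interpolates `f` at those nodes (the problem has value zero). -/
theorem stmt_19 (T : ℝ) (hT : 1 < T) (N : ℕ) :
    IsUnit (Atilde T N).det ∧
    (∀ f : ℝ → ℝ, ∃! φ : ℝ → ℝ, memGN' T N φ ∧
      ∀ k : Fin (2 * N + 2),
        φ (chebNode T N (((k : ℕ) : ℤ) - ((N : ℤ) + 1)))
          = f (chebNode T N (((k : ℕ) : ℤ) - ((N : ℤ) + 1)))) ∧
    (∀ f φ : ℝ → ℝ, memGN' T N φ →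
      (∀ ψ : ℝ → ℝ, memGN' T N ψ →
        (∑ k : Fin (2 * N + 2),
          (f (chebNode T N (((k : ℕ) : ℤ) - ((N : ℤ) + 1)))
            - φ (chebNode T N (((k : ℕ) : ℤ) - ((N : ℤ) + 1)))) ^ 2)
          ≤ ∑ k : Fin (2 * N + 2),
            (f (chebNode T N (((k : ℕ) : ℤ) - ((N : ℤ) + 1)))
              - ψ (chebNode T N (((k : ℕ) : ℤ) - ((N : ℤ) + 1)))) ^ 2) →
      ∀ k : Fin (2 * N + 2),
        φ (chebNode T N (((k : ℕ) : ℤ) - ((N : ℤ) + 1)))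
          = f (chebNode T N (((k : ℕ) : ℤ) - ((N : ℤ) + 1)))) := by
  have hdet : (psiMatrix T N).det ≠ 0 := det_psiMatrix_ne_zero hT N
  have interp := existsUnique_interpolant hdet
  refine ⟨?_, interp, fun f φ _ hmin => interpolates_of_forall_sum_sq_le hmin (interp f).exists⟩
  have hA : Atilde T N = √(π / ((N : ℝ) + 1)) • psiMatrix T N := rfl
  rw [hA, det_smul]
  exact (pow_ne_zero _ (by positivity)).isUnit.mul hdet.isUnit
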